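/- arXiv:2211.07976 — 3 statements merged into one kernel-verified Lean document; each statement's English description precedes it below -/
import Mathlib

section
/- For any positive reals a,b,c,d,e,f, the reciprocal matrix [[1,a,b,c],[1/a,1,d,e],[1/b,1/d,1,f],[1/c,1/e,1/f,1]] is similar, via conjugation by a positive diagonal matrix, to a matrix of the form [[1,1,y,x],[1,1,1,z],[1/y,1,1,1],[1/x,1/z,1,1]] with x = c/(adf), y = b/(ad), z = e/(df). In particular, the two matrices have the same eigenvalues. -/
open Matrix Polynomial

lemma charpoly_conj_aux {n : Type*} [DecidableEq n] [Fintype n]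
    (P M : Matrix n n ℝ) (h : IsUnit P.det) :
    (P * M * P⁻¹).charpoly = M.charpoly := by
  have hP : P * P⁻¹ = 1 := mul_nonsing_inv P h
  have hmapC : (P.map (C : ℝ → ℝ[X])) * (P⁻¹.map C) = 1 := by
    have := congrArg (fun (N : Matrix n n ℝ) => N.map (C : ℝ → ℝ[X])) hP
    simpa [Matrix.map_mul] using this
  have key : charmatrix (P * M * P⁻¹) = P.map C * charmatrix M * P⁻¹.map C := by
    rw [charmatrix, charmatrix]
    have hcomm : P.map (C : ℝ → ℝ[X]) * Matrix.scalar n (X : ℝ[X]) =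
        Matrix.scalar n (X : ℝ[X]) * P.map C :=
      (Matrix.scalar_commute (X : ℝ[X]) (fun r' => Commute.all X r') (P.map C)).eq.symm
    rw [Matrix.mul_sub, Matrix.sub_mul, hcomm]
    congr 1
    · rw [Matrix.mul_assoc, hmapC, Matrix.mul_one]
    · simp [RingHom.mapMatrix_apply, Matrix.map_mul]
  rw [charpoly, charpoly, key, Matrix.det_mul, Matrix.det_mul]
  have : (P.map (C : ℝ → ℝ[X])).det * (P⁻¹.map C).det = 1 := by
    rw [← Matrix.det_mul, hmapC, Matrix.det_one]
  calc (P.map C).det * (charmatrix M).det * (P⁻¹.map C).det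
      = (charmatrix M).det * ((P.map C).det * (P⁻¹.map C).det) := by ring
    _ = (charmatrix M).det := by rw [this, mul_one]

/-- Any 4×4 reciprocal matrix is similar, via conjugation by the positive diagonal
matrix `D = diag(1/(ad), 1/d, 1, f)`, to one of the normal form
`[[1,1,y,x],[1,1,1,z],[1/y,1,1,1],[1/x,1/z,1,1]]` with `x = c/(adf)`, `y = b/(ad)`,
`z = e/(df)`; in particular the two matrices have the same eigenvalues
(same characteristic polynomial). -/
theorem reciprocal_4x4_normal_form (a b c d e f : ℝ)
    (ha : 0 < a) (hb : 0 < b) (hc : 0 < c) (hd : 0 < d) (he : 0 < e) (hf : 0 < f) :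
    let M : Matrix (Fin 4) (Fin 4) ℝ :=
      !![1, a, b, c;
         1/a, 1, d, e;
         1/b, 1/d, 1, f;
         1/c, 1/e, 1/f, 1]
    let D : Matrix (Fin 4) (Fin 4) ℝ := Matrix.diagonal ![1/(a*d), 1/d, 1, f]
    let A : Matrix (Fin 4) (Fin 4) ℝ :=
      !![1, 1, b/(a*d), c/(a*d*f);
         1, 1, 1, e/(d*f);
         (a*d)/b, 1, 1, 1;
         (a*d*f)/c, (d*f)/e, 1, 1]
    D * M * D⁻¹ = A ∧ Matrix.charpoly M = Matrix.charpoly A := by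
  intro M D A
  have ha' := ha.ne'
  have hb' := hb.ne'
  have hc' := hc.ne'
  have hd' := hd.ne'
  have he' := he.ne'
  have hf' := hf.ne'
  have hDinv : D⁻¹ = Matrix.diagonal ![a*d, d, 1, 1/f] := by
    apply inv_eq_right_inv
    show D * _ = 1
    ext i j
    fin_cases i <;> fin_cases j <;>
      · simp [D, Matrix.mul_apply, Fin.sum_univ_four, Matrix.diagonal, Matrix.one_apply]
        try field_simp
        try ring
  have hdet : IsUnit D.det := by
    have : D.det = (1/(a*d)) * ((1/d) * (1 * (f * 1))) := by
      simp [D, Matrix.det_diagonal, Fin.prod_univ_four]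
      ring
    rw [isUnit_iff_ne_zero, this]
    positivity
  have h1 : D * M * D⁻¹ = A := by
    rw [hDinv]
    show Matrix.diagonal _ * M * Matrix.diagonal _ = A
    ext i j
    fin_cases i <;> fin_cases j <;>
      · simp [M, A, Matrix.mul_apply, Fin.sum_univ_four, Matrix.diagonal, Matrix.vecHead,
          Matrix.vecTail]
        try field_simp
        try ring
        try tauto
  refine ⟨h1, ?_⟩
  rw [← h1]
  exact (charpoly_conj_aux D M hdet).symm
end

section
/- The 4×4 matrix J₄ of all ones has dominant eigenvalue (spectral radius) equal to 4, and for every 4×4 matrix A with positive entries satisfying a_ij · a_ji = 1 for all i,j, the dominant eigenvalue of A is at least 4, with equality if and only if A is consistent (a_ij · a_jk = a_ik for all i,j,k). -/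
/-- The dominant (Perron) eigenvalue of a positive reciprocal matrix: for such
matrices it is the largest real root of the characteristic polynomial. -/
noncomputable def domEig {n : ℕ} (A : Matrix (Fin n) (Fin n) ℝ) : ℝ :=
  sSup {t : ℝ | (Matrix.charpoly A).eval t = 0}

namespace SaatyAux

/-- A generic reciprocal 4×4 matrix. -/
noncomputable def M (a b c d e f : ℝ) : Matrix (Fin 4) (Fin 4) ℝ :=
  Matrix.of ![![1, a, b, c], ![a⁻¹, 1, d, e], ![b⁻¹, d⁻¹, 1, f], ![c⁻¹, e⁻¹, f⁻¹, 1]]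

lemma eval_charpoly4 (A : Matrix (Fin 4) (Fin 4) ℝ) (t : ℝ) :
    (Matrix.charpoly A).eval t =
      Matrix.det (Matrix.of fun i j : Fin 4 => (if i = j then t else 0) - A i j) := by
  rw [Matrix.charpoly, ← Polynomial.coe_evalRingHom, RingHom.map_det]
  congr 1
  ext i j
  by_cases h : i = j
  · subst h; simp [Matrix.charmatrix_apply_eq]
  · simp [Matrix.charmatrix_apply_ne _ _ _ h, h]

set_option maxHeartbeats 2000000 in
lemma det4 (B : Matrix (Fin 4) (Fin 4) ℝ) :
    B.det = B 0 0 * (B 1 1 * (B 2 2 * B 3 3 - B 2 3 * B 3 2) - B 1 2 * (B 2 1 * B 3 3 - B 2 3 * B 3 1) + B 1 3 * (B 2 1 * B 3 2 - B 2 2 * B 3 1))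
      - B 0 1 * (B 1 0 * (B 2 2 * B 3 3 - B 2 3 * B 3 2) - B 1 2 * (B 2 0 * B 3 3 - B 2 3 * B 3 0) + B 1 3 * (B 2 0 * B 3 2 - B 2 2 * B 3 0))
      + B 0 2 * (B 1 0 * (B 2 1 * B 3 3 - B 2 3 * B 3 1) - B 1 1 * (B 2 0 * B 3 3 - B 2 3 * B 3 0) + B 1 3 * (B 2 0 * B 3 1 - B 2 1 * B 3 0))
      - B 0 3 * (B 1 0 * (B 2 1 * B 3 2 - B 2 2 * B 3 1) - B 1 1 * (B 2 0 * B 3 2 - B 2 2 * B 3 0) + B 1 2 * (B 2 0 * B 3 1 - B 2 1 * B 3 0)) := by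
  simp [Matrix.det_succ_row_zero, Fin.sum_univ_succ,
    show (Fin.succ 2 : Fin 4) = 3 from rfl,
    show (Fin.succAbove 2 2 : Fin 4) = 3 from rfl,
    show (Fin.succAbove 1 2 : Fin 4) = 3 from rfl,
    show (Fin.castSucc 2 : Fin 4) = 2 from rfl,
    show (Fin.succAbove 3 2 : Fin 4) = 2 from rfl]
  ring

set_option maxHeartbeats 4000000 in
lemma key (a b c d e f t : ℝ) (ha : a ≠ 0) (hb : b ≠ 0) (hc : c ≠ 0)
    (hd : d ≠ 0) (he : e ≠ 0) (hf : f ≠ 0) :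
    (Matrix.charpoly (M a b c d e f)).eval t =
    t^4 - 4*t^3
      - ((a*d/b + (a*d/b)⁻¹ - 2) + (a*e/c + (a*e/c)⁻¹ - 2)
          + (b*f/c + (b*f/c)⁻¹ - 2) + (d*f/e + (d*f/e)⁻¹ - 2)) * t
      + (((a*d/b + (a*d/b)⁻¹ - 2) + (a*e/c + (a*e/c)⁻¹ - 2)
          + (b*f/c + (b*f/c)⁻¹ - 2) + (d*f/e + (d*f/e)⁻¹ - 2))
        - ((a*d*f/c + (a*d*f/c)⁻¹ - 2) + (c*d/(b*e) + (c*d/(b*e))⁻¹ - 2)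
          + (b*f/(a*e) + (b*f/(a*e))⁻¹ - 2))) := by
  rw [eval_charpoly4, det4]
  simp only [M, Matrix.of_apply, Matrix.cons_val_zero, Matrix.cons_val_one,
    Matrix.cons_val_two, Matrix.cons_val_three, Matrix.head_cons,
    Matrix.vecHead, Matrix.vecTail, Function.comp_apply, Matrix.cons_val_succ]
  simp only [show ((0:Fin 4) = 0) = True by simp, show ((1:Fin 4) = 1) = True by simp,
    show ((2:Fin 4) = 2) = True by simp, show ((3:Fin 4) = 3) = True by simp,
    show ((0:Fin 4) = 1) = False by simp, show ((0:Fin 4) = 2) = False by simp,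
    show ((0:Fin 4) = 3) = False by simp, show ((1:Fin 4) = 0) = False by simp,
    show ((1:Fin 4) = 2) = False by simp, show ((1:Fin 4) = 3) = False by simp,
    show ((2:Fin 4) = 0) = False by simp, show ((2:Fin 4) = 1) = False by simp,
    show ((2:Fin 4) = 3) = False by simp, show ((3:Fin 4) = 0) = False by simp,
    show ((3:Fin 4) = 1) = False by simp, show ((3:Fin 4) = 2) = False by simp,
    if_true, if_false, ite_true, ite_false]
  field_simp
  ring

lemma g_nonneg {u : ℝ} (hu : 0 < u) : 0 ≤ u + u⁻¹ - 2 := by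
  have h1 : u * u⁻¹ = 1 := mul_inv_cancel₀ hu.ne'
  have h2 : 0 < u⁻¹ := inv_pos.mpr hu
  nlinarith [sq_nonneg (u - 1), mul_nonneg (sq_nonneg (u - 1)) h2.le]

lemma g_pos {u : ℝ} (hu : 0 < u) (h1 : u ≠ 1) : 0 < u + u⁻¹ - 2 := by
  have h0 : u * u⁻¹ = 1 := mul_inv_cancel₀ hu.ne'
  have h2 : 0 < u⁻¹ := inv_pos.mpr hu
  have h3 : 0 < (u - 1)^2 := by have : u - 1 ≠ 0 := sub_ne_zero.mpr h1; positivity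
  nlinarith [mul_pos h3 h2]


set_option maxHeartbeats 2000000 in
lemma M_consistent (a b c d e f : ℝ) (ha : a ≠ 0) (hb : b ≠ 0) (hc : c ≠ 0)
    (hd : d ≠ 0) (he : e ≠ 0) (hf : f ≠ 0)
    (h1 : a*d = b) (h2 : a*e = c) (h3 : b*f = c) (h4 : d*f = e) :
    ∀ i j k : Fin 4, M a b c d e f i j * M a b c d e f j k = M a b c d e f i k := by
  have hv : ∀ i j, M a b c d e f i j = ![1, a⁻¹, b⁻¹, c⁻¹] i / ![1, a⁻¹, b⁻¹, c⁻¹] j := by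
    intro i j
    fin_cases i <;> fin_cases j <;>
      simp [M] <;> field_simp <;>
      first
      | rfl
      | linear_combination h1 | linear_combination h2 | linear_combination h3
      | linear_combination h4 | linear_combination -h1 | linear_combination -h2
      | linear_combination -h3 | linear_combination -h4
      | ring
  have hvne : ∀ i : Fin 4, ![1, a⁻¹, b⁻¹, c⁻¹] i ≠ 0 := by
    intro i; fin_cases i <;> simp [ha, hb, hc]
  intro i j k
  rw [hv i j, hv j k, hv i k]
  rw [div_mul_div_comm, mul_comm (![1, a⁻¹, b⁻¹, c⁻¹] j)]
  rw [mul_div_mul_right _ _ (hvne j)]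

set_option maxHeartbeats 2000000 in
lemma aux (a b c d e f : ℝ) (ha : 0 < a) (hb : 0 < b) (hc : 0 < c)
    (hd : 0 < d) (he : 0 < e) (hf : 0 < f) :
    4 ≤ domEig (M a b c d e f) ∧
      (domEig (M a b c d e f) = 4 ↔
        ∀ i j k, M a b c d e f i j * M a b c d e f j k = M a b c d e f i k) := by
  obtain ⟨E, hEdef⟩ : ∃ E : ℝ, E = (a*d/b + (a*d/b)⁻¹ - 2) + (a*e/c + (a*e/c)⁻¹ - 2)
      + (b*f/c + (b*f/c)⁻¹ - 2) + (d*f/e + (d*f/e)⁻¹ - 2) := ⟨_, rfl⟩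
  obtain ⟨G, hGdef⟩ : ∃ G : ℝ, G = (a*d*f/c + (a*d*f/c)⁻¹ - 2) + (c*d/(b*e) + (c*d/(b*e))⁻¹ - 2)
      + (b*f/(a*e) + (b*f/(a*e))⁻¹ - 2) := ⟨_, rfl⟩
  have hQ : ∀ t, (Matrix.charpoly (M a b c d e f)).eval t
      = t^4 - 4*t^3 - E*t + (E - G) := by
    intro t
    rw [key a b c d e f t ha.ne' hb.ne' hc.ne' hd.ne' he.ne' hf.ne', ← hEdef, ← hGdef]
  have hE0 : 0 ≤ E := by
    have g1 := g_nonneg (u := a*d/b) (by positivity)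
    have g2 := g_nonneg (u := a*e/c) (by positivity)
    have g3 := g_nonneg (u := b*f/c) (by positivity)
    have g4 := g_nonneg (u := d*f/e) (by positivity)
    rw [hEdef]; linarith
  have hG0 : 0 ≤ G := by
    have g1 := g_nonneg (u := a*d*f/c) (by positivity)
    have g2 := g_nonneg (u := c*d/(b*e)) (by positivity)
    have g3 := g_nonneg (u := b*f/(a*e)) (by positivity)
    rw [hGdef]; linarith
  obtain ⟨S, hSdef⟩ : ∃ S : Set ℝ, S = {t : ℝ | (Matrix.charpoly (M a b c d e f)).eval t = 0} :=
    ⟨_, rfl⟩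
  have hdom : domEig (M a b c d e f) = sSup S := by rw [hSdef]; rfl
  have hpne : Matrix.charpoly (M a b c d e f) ≠ 0 := (Matrix.charpoly_monic _).ne_zero
  have hfin : S.Finite := by rw [hSdef]; exact Polynomial.finite_setOf_isRoot hpne
  have hbdd : BddAbove S := hfin.bddAbove
  -- a root ≥ 4 exists
  obtain ⟨T, hTdef⟩ : ∃ T : ℝ, T = 5 + E + G := ⟨_, rfl⟩
  have hT5 : (5:ℝ) ≤ T := by rw [hTdef]; linarith
  have hTpos : (0:ℝ) < T := by linarith
  have hQT : 0 < T^4 - 4*T^3 - E*T + (E - G) := by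
    have h2 : E * T + G * 1 ≤ (T - 5) * T := by nlinarith
    have h3 : T^3 ≤ T^3 * (T - 4) := by nlinarith [pow_pos hTpos 3]
    nlinarith [h2, h3, pow_pos hTpos 2, pow_pos hTpos 3]
  have hcont : Continuous fun t : ℝ => t^4 - 4*t^3 - E*t + (E - G) := by fun_prop
  have hroot : ∀ q : ℝ, q ≤ 0 → q = 4^4 - 4*4^3 - E*4 + (E - G) →
      ∃ r, 4 ≤ r ∧ (r ∈ S) ∧ (q < 0 → 4 < r) := by
    intro q hq hq4
    have h4T : (4:ℝ) ≤ T := by linarith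
    have hsub := intermediate_value_Icc h4T hcont.continuousOn
    have h0mem : (0:ℝ) ∈ Set.Icc (4^4 - 4*4^3 - E*4 + (E - G))
        (T^4 - 4*T^3 - E*T + (E - G)) := ⟨by rw [← hq4]; exact hq, hQT.le⟩
    obtain ⟨r, hrIcc, hr0⟩ := hsub h0mem
    refine ⟨r, hrIcc.1, ?_, ?_⟩
    · rw [hSdef]
      show (Matrix.charpoly (M a b c d e f)).eval r = 0
      rw [hQ r]; exact hr0
    · intro hqlt
      rcases eq_or_lt_of_le hrIcc.1 with h | h
      · exfalso
        rw [← h] at hr0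
        simp only at hr0
        rw [hq4] at hqlt
        linarith
      · exact h
  have hQ4val : 4^4 - 4*4^3 - E*4 + (E - G) = -3*E - G := by ring
  have hQ4le : (-3*E - G : ℝ) ≤ 0 := by linarith
  obtain ⟨r, hr4, hrS, hrlt⟩ := hroot _ hQ4le hQ4val.symm
  have hle : 4 ≤ domEig (M a b c d e f) := by
    rw [hdom]; exact le_trans hr4 (le_csSup hbdd hrS)
  refine ⟨hle, ?_, ?_⟩
  · -- domEig = 4 → consistent
    intro hd4
    by_contra hncons
    have hE_pos : 0 < E := by
      have hnot : ¬ (a*d = b ∧ a*e = c ∧ b*f = c ∧ d*f = e) := by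
        intro ⟨h1, h2, h3, h4⟩
        exact hncons (M_consistent a b c d e f ha.ne' hb.ne' hc.ne' hd.ne' he.ne' hf.ne'
          h1 h2 h3 h4)
      have g1 := g_nonneg (u := a*d/b) (by positivity)
      have g2 := g_nonneg (u := a*e/c) (by positivity)
      have g3 := g_nonneg (u := b*f/c) (by positivity)
      have g4 := g_nonneg (u := d*f/e) (by positivity)
      rw [not_and_or, not_and_or, not_and_or] at hnot
      rcases hnot with h | h | h | h
      · have : a*d/b ≠ 1 := fun hh => h (by field_simp at hh; linarith)
        have := g_pos (u := a*d/b) (by positivity) this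
        rw [hEdef]; linarith
      · have : a*e/c ≠ 1 := fun hh => h (by field_simp at hh; linarith)
        have := g_pos (u := a*e/c) (by positivity) this
        rw [hEdef]; linarith
      · have : b*f/c ≠ 1 := fun hh => h (by field_simp at hh; linarith)
        have := g_pos (u := b*f/c) (by positivity) this
        rw [hEdef]; linarith
      · have : d*f/e ≠ 1 := fun hh => h (by field_simp at hh; linarith)
        have := g_pos (u := d*f/e) (by positivity) this
        rw [hEdef]; linarith
    obtain ⟨r', hr4', hrS', hrlt'⟩ := hroot _ hQ4le hQ4val.symm
    have : 4 < r' := hrlt' (by linarith)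
    have : 4 < domEig (M a b c d e f) := by
      rw [hdom]; exact lt_of_lt_of_le this (le_csSup hbdd hrS')
    linarith [hd4 ▸ this]
  · -- consistent → domEig = 4
    intro hcons
    have h1 : a * d = b := by
      have := hcons 0 1 2
      simpa [M, Matrix.cons_val_one, Matrix.cons_val_two, Matrix.head_cons,
        Matrix.vecHead, Matrix.vecTail] using this
    have h2 : a * e = c := by
      have := hcons 0 1 3
      simpa [M, Matrix.cons_val_one, Matrix.cons_val_three, Matrix.head_cons,
        Matrix.vecHead, Matrix.vecTail] using this
    have h3 : b * f = c := by
      have := hcons 0 2 3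
      simpa [M, Matrix.cons_val_two, Matrix.cons_val_three, Matrix.head_cons,
        Matrix.vecHead, Matrix.vecTail] using this
    have h4 : d * f = e := by
      have := hcons 1 2 3
      simpa [M, Matrix.cons_val_two, Matrix.cons_val_three, Matrix.head_cons,
        Matrix.vecHead, Matrix.vecTail] using this
    have r1 : a*d/b = 1 := by rw [div_eq_one_iff_eq hb.ne']; exact h1
    have r2 : a*e/c = 1 := by rw [div_eq_one_iff_eq hc.ne']; exact h2
    have r3 : b*f/c = 1 := by rw [div_eq_one_iff_eq hc.ne']; exact h3
    have r4 : d*f/e = 1 := by rw [div_eq_one_iff_eq he.ne']; exact h4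
    have r5 : a*d*f/c = 1 := by
      rw [div_eq_one_iff_eq hc.ne']; rw [← h3, ← h1]
    have r6 : c*d/(b*e) = 1 := by
      rw [div_eq_one_iff_eq (by positivity : (b*e) ≠ 0)]
      rw [← h2, ← h1]; ring
    have r7 : b*f/(a*e) = 1 := by
      rw [div_eq_one_iff_eq (by positivity : (a*e) ≠ 0)]
      rw [h3, h2]
    have hEz : E = 0 := by rw [hEdef, r1, r2, r3, r4]; norm_num
    have hGz : G = 0 := by rw [hGdef, r5, r6, r7]; norm_num
    have hSeq : S = {0, 4} := by
      ext t
      rw [hSdef]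
      simp only [Set.mem_setOf_eq, hQ t, hEz, hGz, Set.mem_insert_iff,
        Set.mem_singleton_iff]
      constructor
      · intro h
        have h' : t^3 * (t - 4) = 0 := by linear_combination h
        rcases mul_eq_zero.mp h' with h'' | h''
        · left; exact pow_eq_zero_iff (by norm_num) |>.mp h''
        · right; linarith [sub_eq_zero.mp h'']
      · rintro (rfl | rfl) <;> norm_num
    rw [hdom, hSeq, csSup_pair]
    norm_num

end SaatyAux

open SaatyAux in
/-- Saaty's theorem for `n = 4`: the all-ones matrix `J₄` has dominant eigenvalue `4`,
and every 4×4 reciprocal matrix `A` (positive entries with `aᵢⱼ·aⱼᵢ = 1`) has dominant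
eigenvalue at least `4`, with equality iff `A` is consistent. -/
theorem saaty_four :
    domEig (Matrix.of fun _ _ => (1 : ℝ) : Matrix (Fin 4) (Fin 4) ℝ) = 4 ∧
    ∀ A : Matrix (Fin 4) (Fin 4) ℝ,
      (∀ i j, 0 < A i j) → (∀ i j, A i j * A j i = 1) →
      4 ≤ domEig A ∧ (domEig A = 4 ↔ ∀ i j k, A i j * A j k = A i k) := by
  have main : ∀ A : Matrix (Fin 4) (Fin 4) ℝ, (∀ i j, 0 < A i j) →
      (∀ i j, A i j * A j i = 1) →
      4 ≤ domEig A ∧ (domEig A = 4 ↔ ∀ i j k, A i j * A j k = A i k) := by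
    intro A hpos hrec
    have hdg : ∀ i, A i i = 1 := fun i => by nlinarith [hrec i i, hpos i i]
    have hinv : ∀ i j, A j i = (A i j)⁻¹ := fun i j => by
      have h := hrec i j
      have := (hpos i j).ne'
      field_simp
      linear_combination h
    have hA : A = M (A 0 1) (A 0 2) (A 0 3) (A 1 2) (A 1 3) (A 2 3) := by
      ext i j
      fin_cases i <;> fin_cases j <;>
        simp [M, hdg, hinv 0 1, hinv 0 2, hinv 0 3, hinv 1 2, hinv 1 3, hinv 2 3]
    rw [hA]
    exact aux _ _ _ _ _ _ (hpos 0 1) (hpos 0 2) (hpos 0 3) (hpos 1 2) (hpos 1 3) (hpos 2 3)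
  constructor
  · have h := main (Matrix.of fun _ _ => 1) (fun _ _ => one_pos) (fun _ _ => by simp)
    exact h.2.mpr (fun _ _ _ => by simp)
  · exact main
end

section
/- For the 5×5 incomplete reciprocal matrix A with known entries a_12 = 1/2, a_13 = 5, a_14 = 1/6, a_23 = 4, a_24 = 1/2, a_25 = 1/6, a_34 = 1/6, a_35 = 1/7, a_45 = 1/2 (and reciprocal lower entries), the logarithmic least squares optimal value of the missing entry a_15 equals the geometric-mean expression w_1/w_5 where w minimizes Σ_{known (i,j)} (log a_ij − log w_i + log w_j)², and this value is strictly less than 0.18; in particular 0.17 < w_1/w_5 < 0.18. -/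
set_option maxHeartbeats 1000000 in
private lemma quad_aux_neg {S : ℝ} (h : ∀ ε : ℝ, 0 ≤ 3 * ε ^ 2 - 2 * ε * S) : S = 0 := by
  have h1 := h (S / 3)
  have h2 : S ^ 2 ≤ 0 := by nlinarith
  have h3 : S ^ 2 = 0 := le_antisymm h2 (sq_nonneg S)
  exact pow_eq_zero_iff (two_ne_zero) |>.mp h3

private lemma quad_aux_pos {T : ℝ} (h : ∀ ε : ℝ, 0 ≤ 3 * ε ^ 2 + 2 * ε * T) : T = 0 := by
  have h1 : ∀ ε : ℝ, 0 ≤ 3 * ε ^ 2 - 2 * ε * (-T) := by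
    intro ε; have := h ε; nlinarith
  have := quad_aux_neg h1
  linarith

set_option maxHeartbeats 1000000 in
/-- For the 5×5 incomplete reciprocal matrix of the paper
(known entries `a₁₂ = 1/2, a₁₃ = 5, a₁₄ = 1/6, a₂₃ = 4, a₂₄ = 1/2, a₂₅ = 1/6,
a₃₄ = 1/6, a₃₅ = 1/7, a₄₅ = 1/2`; entry `a₁₅` missing), the logarithmic least
squares optimal completion `a₁₅ = w₁/w₅`, where the positive vector `w` minimises
the sum of squared log-errors over known entries, satisfies `0.17 < w₁/w₅ < 0.18`. -/
theorem lls_five_by_five_completion :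
    let F : (Fin 5 → ℝ) → ℝ := fun w =>
      (Real.log (1/2) - Real.log (w 0) + Real.log (w 1)) ^ 2 +
      (Real.log 5 - Real.log (w 0) + Real.log (w 2)) ^ 2 +
      (Real.log (1/6) - Real.log (w 0) + Real.log (w 3)) ^ 2 +
      (Real.log 4 - Real.log (w 1) + Real.log (w 2)) ^ 2 +
      (Real.log (1/2) - Real.log (w 1) + Real.log (w 3)) ^ 2 +
      (Real.log (1/6) - Real.log (w 1) + Real.log (w 4)) ^ 2 +
      (Real.log (1/6) - Real.log (w 2) + Real.log (w 3)) ^ 2 +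
      (Real.log (1/7) - Real.log (w 2) + Real.log (w 4)) ^ 2 +
      (Real.log (1/2) - Real.log (w 3) + Real.log (w 4)) ^ 2
    ∀ w : Fin 5 → ℝ, (∀ i, 0 < w i) →
      (∀ v : Fin 5 → ℝ, (∀ i, 0 < v i) → F w ≤ F v) →
      0.17 < w 0 / w 4 ∧ w 0 / w 4 < 0.18 := by
  intro F w hw hmin
  -- first-order condition at node 0
  have key0 : ∀ ε : ℝ, 0 ≤ 3 * ε ^ 2 - 2 * ε *
      ((Real.log (1/2) + Real.log 5 + Real.log (1/6))
        - 3 * Real.log (w 0) + (Real.log (w 1) + Real.log (w 2) + Real.log (w 3))) := by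
    intro ε
    have hv := hmin (fun i => if i = 0 then w 0 * Real.exp ε else w i)
      (by intro i; by_cases h : i = 0 <;> simp only [h, if_true, if_false]
          · exact mul_pos (hw 0) (Real.exp_pos ε)
          · exact hw i)
    simp only [F] at hv ⊢
    have hl : Real.log (w 0 * Real.exp ε) = Real.log (w 0) + ε := by
      rw [Real.log_mul (hw 0).ne' (Real.exp_pos ε).ne', Real.log_exp]
    simp only [show ((0:Fin 5) = 0) = True by simp, show ((1:Fin 5) = 0) = False by decide,
      show ((2:Fin 5) = 0) = False by decide, show ((3:Fin 5) = 0) = False by decide,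
      show ((4:Fin 5) = 0) = False by decide, if_true, if_false] at hv
    rw [hl] at hv
    nlinarith [hv]
  -- first-order condition at node 4
  have key4 : ∀ ε : ℝ, 0 ≤ 3 * ε ^ 2 + 2 * ε *
      ((Real.log (1/6) + Real.log (1/7) + Real.log (1/2))
        - (Real.log (w 1) + Real.log (w 2) + Real.log (w 3)) + 3 * Real.log (w 4)) := by
    intro ε
    have hv := hmin (fun i => if i = 4 then w 4 * Real.exp ε else w i)
      (by intro i; by_cases h : i = 4 <;> simp only [h, if_true, if_false]
          · exact mul_pos (hw 4) (Real.exp_pos ε)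
          · exact hw i)
    simp only [F] at hv ⊢
    have hl : Real.log (w 4 * Real.exp ε) = Real.log (w 4) + ε := by
      rw [Real.log_mul (hw 4).ne' (Real.exp_pos ε).ne', Real.log_exp]
    simp only [show ((4:Fin 5) = 4) = True by simp, show ((1:Fin 5) = 4) = False by decide,
      show ((2:Fin 5) = 4) = False by decide, show ((3:Fin 5) = 4) = False by decide,
      show ((0:Fin 5) = 4) = False by decide, if_true, if_false] at hv
    rw [hl] at hv
    nlinarith [hv]
  -- extract the two normal equations
  have hS := quad_aux_neg key0
  have hT := quad_aux_pos key4
  -- hence 3 (log w0 - log w4) = log (5/1008)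
  have hlog : 3 * (Real.log (w 0) - Real.log (w 4)) = Real.log (5 / 1008) := by
    have h5 : Real.log (1/2) + Real.log 5 + Real.log (1/6) + Real.log (1/6)
        + Real.log (1/7) + Real.log (1/2) = Real.log (5 / 1008) := by
      rw [← Real.log_mul (by norm_num) (by norm_num),
          ← Real.log_mul (by norm_num) (by norm_num),
          ← Real.log_mul (by norm_num) (by norm_num),
          ← Real.log_mul (by norm_num) (by norm_num),
          ← Real.log_mul (by norm_num) (by norm_num)]
      norm_num
    linarith [hS, hT, h5]
  -- hence (w0/w4)^3 = 5/1008
  have hr0 : 0 < w 0 / w 4 := div_pos (hw 0) (hw 4)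
  have hcube : (w 0 / w 4) ^ 3 = 5 / 1008 := by
    have h1 : Real.log ((w 0 / w 4) ^ 3) = Real.log (5 / 1008) := by
      rw [Real.log_pow, Real.log_div (hw 0).ne' (hw 4).ne']
      push_cast
      linarith [hlog]
    have h2 : (0:ℝ) < (w 0 / w 4) ^ 3 := by positivity
    have h4 := congrArg Real.exp h1
    rwa [Real.exp_log h2, Real.exp_log (by norm_num : (0:ℝ) < 5 / 1008)] at h4
  constructor
  · nlinarith [hr0, hcube, mul_pos hr0 hr0]
  · nlinarith [hr0, hcube, mul_pos hr0 hr0]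
end
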